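/- For all integers n ≥ 1 and 1 ≤ k ≤ n−1, the Dushnik–Miller dimension of the poset Q^n_{[0,k]} of subsets of {1,…,n} of cardinality at most k, ordered by inclusion, equals N(n, k+1), the minimum cardinality of a (k+1)-suitable set of permutations of {1,…,n}. -/

import Mathlib

/-- The Dushnik-Miller dimension of a poset `P`: the least `d` such that there is
an order embedding of `P` into `ℝ^d` with the componentwise order. -/
noncomputable def dimDM (P : Type*) [PartialOrder P] : ℕ :=
  sInf {d : ℕ | ∃ f : P → (Fin d → ℝ), ∀ a b : P, (f a ≤ f b ↔ a ≤ b)}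

/-- A set `S` of permutations of `{1,…,n}` (modelled as `Fin n`) is `k`-suitable if for
every pointed `k`-subset `(A, a)` there is `σ ∈ S` with `σ b ≤ σ a` for every `b ∈ A`. -/
def IsSuitable (n k : ℕ) (S : Finset (Equiv.Perm (Fin n))) : Prop :=
  ∀ A : Finset (Fin n), A.card = k → ∀ a ∈ A, ∃ σ ∈ S, ∀ b ∈ A, σ b ≤ σ a

/-- `N(n, k)`: the minimum cardinality of a `k`-suitable set of permutations of `{1,…,n}`. -/
noncomputable def suitableNumber (n k : ℕ) : ℕ :=
  sInf {m : ℕ | ∃ S : Finset (Equiv.Perm (Fin n)), IsSuitable n k S ∧ S.card = m}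

/-!
A `(k+1)`-suitable family `S` embeds `Q^n_{[0,k]}` into `ℝ^S`: the coordinate of `σ ∈ S` sends
`A` to `max_{x ∈ A} σ x + 1` (and `∅` to `0`). If `A ⊄ B`, pick `a ∈ A \ B`; suitability applied
to a `(k+1)`-set containing `B ∪ {a}` gives a `σ` ranking `a` above all of `B`, and that coordinate
separates `A` from `B`.

Conversely, given an embedding `f` into `ℝ^d`, sort the `i`-th coordinates of the singletons into a
permutation `σ_i`. For a pointed `(k+1)`-set `(A, a)`, `{a} ⊄ A \ {a}` yields an `i` with
`f(A \ {a})_i < f({a})_i`, while `f({b})_i ≤ f(A \ {a})_i` for `b ∈ A \ {a}`; so `σ_i` puts `a`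
on top of `A`.
-/

def OrderIso.arrowCongrLeft {ι κ : Type*} (e : ι ≃ κ) (β : Type*) [Preorder β] :
    (ι → β) ≃o (κ → β) where
  toEquiv := e.arrowCongr (Equiv.refl β)
  map_rel_iff' {x y} := by
    simp only [Equiv.arrowCongr_apply, Equiv.coe_refl, Pi.le_def, Function.comp_apply, id_eq]
    exact (e.forall_congr_left (p := fun i => x i ≤ y i)).symm

section dimDM

variable {P ι : Type*} [PartialOrder P] [Fintype ι]

lemma card_mem_dimDM_set (f : P ↪o (ι → ℝ)) :
    Fintype.card ι ∈ {d : ℕ | ∃ g : P → (Fin d → ℝ), ∀ a b, g a ≤ g b ↔ a ≤ b} :=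
  let g : P ↪o (Fin (Fintype.card ι) → ℝ) :=
    f.trans (OrderIso.arrowCongrLeft (Fintype.equivFin ι) ℝ).toOrderEmbedding
  ⟨g, fun _ _ => g.le_iff_le⟩

lemma dimDM_le_card (f : P ↪o (ι → ℝ)) : dimDM P ≤ Fintype.card ι :=
  Nat.sInf_le (card_mem_dimDM_set f)

lemma nonempty_orderEmbedding_fin_dimDM (f : P ↪o (ι → ℝ)) :
    Nonempty (P ↪o (Fin (dimDM P) → ℝ)) :=
  let ⟨g, hg⟩ := Nat.sInf_mem ⟨_, card_mem_dimDM_set f⟩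
  ⟨OrderEmbedding.ofMapLEIff g hg⟩

end dimDM

lemma exists_perm_lt_of_lt {α : Type*} [LinearOrder α] {n : ℕ} (g : Fin n → α) :
    ∃ σ : Equiv.Perm (Fin n), ∀ x y, g x < g y → σ x < σ y := by
  refine ⟨(Tuple.sort g)⁻¹, fun x y hxy => (Tuple.monotone_sort g).reflect_lt ?_⟩
  simpa only [Function.comp_apply, Equiv.Perm.inv_def, Equiv.apply_symm_apply] using hxy

lemma Finset.sup_add_one_lt_sup_add_one {ι : Type*} {r : ι → ℕ} {A B : Finset ι} {a : ι}
    (ha : a ∈ A) (hB : ∀ b ∈ B, r b < r a) :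
    B.sup (r · + 1) < A.sup (r · + 1) :=
  calc B.sup (r · + 1) ≤ r a := Finset.sup_le hB
    _ < r a + 1 := Nat.lt_succ_self _
    _ ≤ A.sup (r · + 1) := Finset.le_sup (f := (r · + 1)) ha

section IsSuitable

variable {n k : ℕ} {ι : Type*} [Fintype ι] {S : Finset (Equiv.Perm (Fin n))}

lemma isSuitable_univ (n k : ℕ) : IsSuitable n k Finset.univ := by
  intro A _ a _
  obtain ⟨σ, hσ⟩ := exists_perm_lt_of_lt fun x => if x = a then 1 else 0
  refine ⟨σ, Finset.mem_univ σ, fun b _ => ?_⟩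
  rcases eq_or_ne b a with rfl | hba
  · exact le_rfl
  · exact (hσ b a (by simp [hba])).le

lemma exists_isSuitable_card_eq_suitableNumber (n k : ℕ) :
    ∃ S, IsSuitable n k S ∧ S.card = suitableNumber n k :=
  Nat.sInf_mem (s := {m | ∃ S, IsSuitable n k S ∧ S.card = m})
    ⟨_, Finset.univ, isSuitable_univ n k, rfl⟩

lemma suitableNumber_le_card (hS : IsSuitable n k S) : suitableNumber n k ≤ S.card :=
  Nat.sInf_le ⟨S, hS, rfl⟩

lemma isSuitable_succ_of_forall_exists_lt
    (h : ∀ B : Finset (Fin n), B.card = k → ∀ a ∉ B, ∃ σ ∈ S, ∀ b ∈ B, σ b < σ a) :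
    IsSuitable n (k + 1) S := by
  intro A hA a ha
  obtain ⟨σ, hσS, hσ⟩ := h (A.erase a) (by simp [ha, hA]) a (A.notMem_erase a)
  refine ⟨σ, hσS, fun b hb => ?_⟩
  rcases eq_or_ne b a with rfl | hba
  · exact le_rfl
  · exact (hσ b (Finset.mem_erase.2 ⟨hba, hb⟩)).le

lemma IsSuitable.exists_lt (hS : IsSuitable n (k + 1) S) (hkn : k + 1 ≤ n)
    {B : Finset (Fin n)} (hB : B.card ≤ k) {a : Fin n} (ha : a ∉ B) :
    ∃ σ ∈ S, ∀ b ∈ B, σ b < σ a := by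
  obtain ⟨D, hBD, hD⟩ := Finset.exists_superset_card_eq (s := insert a B)
    ((Finset.card_insert_le a B).trans (Nat.succ_le_succ hB)) (by simpa using hkn)
  obtain ⟨σ, hσS, hσ⟩ := hS D hD a (hBD (Finset.mem_insert_self a B))
  refine ⟨σ, hσS, fun b hb => (hσ b (hBD (Finset.mem_insert_of_mem hb))).lt_of_ne ?_⟩
  exact σ.injective.ne (ne_of_mem_of_not_mem hb ha)

lemma IsSuitable.nonempty_orderEmbedding (hS : IsSuitable n (k + 1) S) (hkn : k + 1 ≤ n) :
    Nonempty ({A : Finset (Fin n) // A.card ≤ k} ↪o (S → ℝ)) := by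
  refine ⟨OrderEmbedding.ofMapLEIff
    (fun A σ => ((A.1.sup fun x => ((σ.1 x : ℕ) + 1) : ℕ) : ℝ)) fun A B => ⟨?_, ?_⟩⟩
  · intro hAB
    by_contra hnot
    obtain ⟨a, haA, haB⟩ := Finset.not_subset.1 hnot
    obtain ⟨σ, hσS, hσ⟩ := hS.exists_lt hkn B.2 haB
    exact not_le_of_gt (Finset.sup_add_one_lt_sup_add_one haA hσ)
      (Nat.cast_le.1 (hAB ⟨σ, hσS⟩))
  · intro hAB σ
    exact Nat.cast_le.2 (Finset.sup_mono hAB)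

lemma suitableNumber_succ_le_card (hk : 1 ≤ k)
    (f : {A : Finset (Fin n) // A.card ≤ k} ↪o (ι → ℝ)) :
    suitableNumber n (k + 1) ≤ Fintype.card ι := by
  classical
  let single (x : Fin n) : {A : Finset (Fin n) // A.card ≤ k} := ⟨{x}, by simpa using hk⟩
  choose σ hσ using fun i => exists_perm_lt_of_lt fun x => f (single x) i
  refine (suitableNumber_le_card (S := Finset.univ.image σ) ?_).trans Finset.card_image_le
  refine isSuitable_succ_of_forall_exists_lt fun B hB a ha => ?_
  let B' : {A : Finset (Fin n) // A.card ≤ k} := ⟨B, hB.le⟩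
  have ha' : ¬ single a ≤ B' := by simpa [single, B'] using ha
  obtain ⟨i, hi⟩ := not_forall.1 (mt f.le_iff_le.1 ha')
  refine ⟨σ i, Finset.mem_image_of_mem _ (Finset.mem_univ i), fun b hb => hσ i b a ?_⟩
  have hb' : single b ≤ B' := by simpa [single, B'] using hb
  exact (f.le_iff_le.2 hb' i).trans_lt (not_le.1 hi)

end IsSuitable

theorem dimDM_upToK_eq_suitableNumber_general (n k : ℕ) (hk1 : 1 ≤ k)
    (hk2 : k ≤ n - 1) :
    dimDM {A : Finset (Fin n) // A.card ≤ k} = suitableNumber n (k + 1) := by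
  obtain ⟨S, hS, hcard⟩ := exists_isSuitable_card_eq_suitableNumber n (k + 1)
  obtain ⟨f⟩ := hS.nonempty_orderEmbedding (by omega)
  obtain ⟨g⟩ := nonempty_orderEmbedding_fin_dimDM f
  apply le_antisymm
  · simpa [hcard] using dimDM_le_card f
  · simpa using suitableNumber_succ_le_card hk1 g

/-- `dim(Q^n_{[0,k]}) = N(n, k+1)` for `1 ≤ k ≤ n - 1`. -/
theorem dimDM_upToK_eq_suitableNumber (n k : ℕ) (hn : 1 ≤ n) (hk1 : 1 ≤ k)
    (hk2 : k ≤ n - 1) :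
    dimDM {A : Finset (Fin n) // A.card ≤ k} = suitableNumber n (k + 1) :=
  dimDM_upToK_eq_suitableNumber_general n k hk1 hk2
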